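/- arXiv:2009.03485 — 2 statements merged into one kernel-verified Lean document; each statement's English description precedes it below -/
import Mathlib

section
/- Constructively, for any two predicates ρ₁ : α → Prop and ρ₂ : β → Prop: if ∀ x y, ¬¬(¬¬ρ₁ x ∨ ¬¬ρ₂ y), then ¬¬((∀ x, ¬¬ρ₁ x) ∨ (∀ y, ¬¬ρ₂ y)). -/
/-! No excluded middle is needed to decide which universal statement fails: the refuted goal is used
twice, once to obtain a counterexample `x` to the first and, inside that, once more to obtain a
counterexample `y` to the second, and the pair `(x, y)` then contradicts the hypothesis. -/

section

variable {α β : Type*} {ρ₁ : α → Prop} {ρ₂ : β → Prop}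

theorem not_exists_not_and_exists_not (h : ∀ x y, ¬¬(¬¬ρ₁ x ∨ ¬¬ρ₂ y)) :
    ¬((∃ x, ¬ρ₁ x) ∧ ∃ y, ¬ρ₂ y) :=
  fun ⟨⟨x, hx⟩, y, hy⟩ => h x y fun d => d.elim (· hx) (· hy)

theorem not_not_forall_or_forall_of_not_exists_and
    (h : ¬((∃ x, ¬ρ₁ x) ∧ ∃ y, ¬ρ₂ y)) :
    ¬¬((∀ x, ¬¬ρ₁ x) ∨ ∀ y, ¬¬ρ₂ y) :=
  fun hn => hn <| .inl fun x hx => hn <| .inr fun y hy => h ⟨⟨x, hx⟩, y, hy⟩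

end

theorem stmt_8 {α β : Type*} (ρ₁ : α → Prop) (ρ₂ : β → Prop)
    (h : ∀ x y, ¬¬(¬¬ρ₁ x ∨ ¬¬ρ₂ y)) :
    ¬¬((∀ x, ¬¬ρ₁ x) ∨ (∀ y, ¬¬ρ₂ y)) :=
  not_not_forall_or_forall_of_not_exists_and (not_exists_not_and_exists_not h)
end

section
/- Constructively: for predicates ρ₁ : α → Prop and ρ₂ : β → Prop, if (i) double negation elimination holds for each ρ₁ x and each ρ₂ y, and (ii) ¬¬((∀ x, ρ₁ x) ∨ (∀ y, ρ₂ y)) implies (∀ x, ρ₁ x) ∨ (∀ y, ρ₂ y), then ((∀ x, ρ₁ x) ∨ (∀ y, ρ₂ y)) is equivalent to ∀ x y, (ρ₁ x ∨ ρ₂ y). -/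
/-- Under `¬(A ∨ B)`, a point `x` with `¬ρ₁ x` would make `ρ₂` hold everywhere, so every `ρ₁ x`
is doubly negated, hence true; thus `A` holds after all. -/
theorem not_not_forall_or_forall_of_forall_or {α β : Type*} {ρ₁ : α → Prop} {ρ₂ : β → Prop}
    (h₁ : ∀ x, ¬¬ρ₁ x → ρ₁ x) (h : ∀ x y, ρ₁ x ∨ ρ₂ y) :
    ¬¬((∀ x, ρ₁ x) ∨ ∀ y, ρ₂ y) := fun hn =>
  hn <| Or.inl fun x => h₁ x fun hx => hn <| Or.inr fun y => (h x y).resolve_left hx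

theorem stmt_15_general {α β : Type*} (ρ₁ : α → Prop) (ρ₂ : β → Prop)
    (h₁ : ∀ x, ¬¬(ρ₁ x) → ρ₁ x)
    (h₃ : ¬¬((∀ x, ρ₁ x) ∨ (∀ y, ρ₂ y)) → (∀ x, ρ₁ x) ∨ (∀ y, ρ₂ y)) :
    ((∀ x, ρ₁ x) ∨ (∀ y, ρ₂ y)) ↔ ∀ x y, (ρ₁ x ∨ ρ₂ y) :=
  ⟨fun h x y => h.imp (· x) (· y), fun h => h₃ (not_not_forall_or_forall_of_forall_or h₁ h)⟩

theorem stmt_15 {α β : Type*} (ρ₁ : α → Prop) (ρ₂ : β → Prop)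
    (h₁ : ∀ x, ¬¬(ρ₁ x) → ρ₁ x) (h₂ : ∀ y, ¬¬(ρ₂ y) → ρ₂ y)
    (h₃ : ¬¬((∀ x, ρ₁ x) ∨ (∀ y, ρ₂ y)) → (∀ x, ρ₁ x) ∨ (∀ y, ρ₂ y)) :
    ((∀ x, ρ₁ x) ∨ (∀ y, ρ₂ y)) ↔ ∀ x y, (ρ₁ x ∨ ρ₂ y) :=
  stmt_15_general ρ₁ ρ₂ h₁ h₃
end
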